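/- (Policy Gradient with Policy Baseline identity.) Let S and A be finite nonempty sets, d : S → ℝ a probability mass function on S, T̂ : S × A → ℝ a fixed target function, θ₀ ∈ ℝⁿ, and q : ℝⁿ → S → A → ℝ with θ ↦ q θ s a differentiable at θ₀ for all (s,a). For each s let π_θ(a|s) be the softmax policy of a ↦ q θ s a and let H_s(θ) = − Σ_a π_θ(a|s) log π_θ(a|s). Then Σ_{s,a} d(s) π_{θ₀}(a|s) · T̂(s,a) · ∇_θ log π_θ(a|s)|_{θ₀} = Σ_{s,a} d(s) π_{θ₀}(a|s) · [ (T̂(s,a) − q θ₀ s a) · ∇_θ log π_θ(a|s)|_{θ₀} − ∇_θ H_s(θ₀) ]. -/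

import Mathlib

/-!
Fix a state `s`. Since `∑ₐ π_θ(a|s) = 1` for every `θ`, the score identity
`∑ₐ ∇π(a|s) = ∑ₐ π(a|s) ∇log π(a|s) = 0` holds. Writing `H_s = ∑ₐ negMulLog π(a|s)`, the
chain rule gives `∇H_s = -∑ₐ (log π(a|s) + 1) ∇π(a|s)`, and because `log π(a|s)` differs from
the logit `q(s,a)` by a term independent of `a`, the score identity turns this into
`∇H_s = -∑ₐ π(a|s) q(s,a) ∇log π(a|s)`. So subtracting `∇H_s` exactly compensates the
baseline `q(s,a)` in expectation over `a ~ π(·|s)`.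
-/

section

open Finset Real

variable {E : Type*} [NormedAddCommGroup E] [NormedSpace ℝ E] {ι : Type*} [Fintype ι]

theorem sum_fderiv_eq_zero_of_sum_eq_one {p : E → ι → ℝ} {x : E}
    (hp : ∀ y, ∑ i, p y i = 1) (hd : ∀ i, DifferentiableAt ℝ (fun y => p y i) x) :
    ∑ i, fderiv ℝ (fun y => p y i) x = 0 := by
  have h := HasFDerivAt.fun_sum (u := univ) fun i _ => (hd i).hasFDerivAt
  rw [show (fun y => ∑ i ∈ univ, p y i) = fun _ => 1 from funext hp] at h
  exact h.unique (hasFDerivAt_const 1 x)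

theorem fderiv_eq_smul_fderiv_log {f : E → ℝ} {x : E} (hf : DifferentiableAt ℝ f x)
    (hx : f x ≠ 0) : fderiv ℝ f x = f x • fderiv ℝ (fun y => log (f y)) x := by
  rw [(hf.hasFDerivAt.log hx).fderiv, smul_inv_smul₀ hx]

theorem fderiv_sum_negMulLog {p : E → ι → ℝ} {x : E} (hp : ∀ y, ∑ i, p y i = 1)
    (hd : ∀ i, DifferentiableAt ℝ (fun y => p y i) x) (hx : ∀ i, p x i ≠ 0) :
    fderiv ℝ (fun y => ∑ i, negMulLog (p y i)) x =
      -∑ i, log (p x i) • fderiv ℝ (fun y => p y i) x := by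
  have h := HasFDerivAt.fun_sum (u := univ) fun i _ =>
    (hasDerivAt_negMulLog (hx i)).comp_hasFDerivAt x (hd i).hasFDerivAt
  refine h.fderiv.trans ?_
  have h0 := sum_fderiv_eq_zero_of_sum_eq_one hp hd
  simp only [sub_smul, neg_smul, one_smul, sum_sub_distrib, sum_neg_distrib, h0, sub_zero]

noncomputable def softmax (z : ι → ℝ) (i : ι) : ℝ :=
  exp (z i) / ∑ j, exp (z j)

theorem sum_exp_pos (z : ι → ℝ) (i : ι) : 0 < ∑ j, exp (z j) :=
  sum_pos (fun j _ => exp_pos (z j)) ⟨i, mem_univ i⟩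

theorem softmax_pos (z : ι → ℝ) (i : ι) : 0 < softmax z i :=
  div_pos (exp_pos _) (sum_exp_pos z i)

theorem sum_softmax [Nonempty ι] (z : ι → ℝ) : ∑ i, softmax z i = 1 := by
  simp only [softmax]
  rw [← sum_div, div_self (sum_exp_pos z (Classical.arbitrary ι)).ne']

theorem log_softmax (z : ι → ℝ) (i : ι) :
    log (softmax z i) = z i - log (∑ j, exp (z j)) := by
  rw [softmax, log_div (exp_ne_zero _) (sum_exp_pos z i).ne', log_exp]

theorem differentiableAt_softmax {q : E → ι → ℝ} {x : E}
    (hq : ∀ i, DifferentiableAt ℝ (fun y => q y i) x) (i : ι) :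
    DifferentiableAt ℝ (fun y => softmax (q y) i) x := by
  simp only [softmax, div_eq_mul_inv]
  exact (hq i).exp.mul ((DifferentiableAt.fun_sum fun j _ => (hq j).exp).fun_inv
    (sum_exp_pos (q x) i).ne')

theorem fderiv_entropy_softmax [Nonempty ι] {q : E → ι → ℝ} {x : E}
    (hq : ∀ i, DifferentiableAt ℝ (fun y => q y i) x) :
    fderiv ℝ (fun y => ∑ i, negMulLog (softmax (q y) i)) x =
      -∑ i, (softmax (q x) i * q x i) • fderiv ℝ (fun y => log (softmax (q y) i)) x := by
  have hd := differentiableAt_softmax hq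
  have h0 := sum_fderiv_eq_zero_of_sum_eq_one (fun y => sum_softmax (q y)) hd
  calc fderiv ℝ (fun y => ∑ i, negMulLog (softmax (q y) i)) x
      = -∑ i, log (softmax (q x) i) • fderiv ℝ (fun y => softmax (q y) i) x :=
        fderiv_sum_negMulLog (fun y => sum_softmax (q y)) hd fun i => (softmax_pos _ i).ne'
    _ = -∑ i, q x i • fderiv ℝ (fun y => softmax (q y) i) x := by
        simp only [log_softmax, sub_smul, sum_sub_distrib, ← smul_sum, h0, smul_zero, sub_zero]
    _ = _ := by
        simp only [fun i => fderiv_eq_smul_fderiv_log (hd i) (softmax_pos _ i).ne', smul_smul,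
          mul_comm]

theorem gradient_entropy_softmax {F : Type*} [NormedAddCommGroup F] [InnerProductSpace ℝ F]
    [CompleteSpace F] [Nonempty ι] {q : F → ι → ℝ} {x : F}
    (hq : ∀ i, DifferentiableAt ℝ (fun y => q y i) x) :
    gradient (fun y => ∑ i, negMulLog (softmax (q y) i)) x =
      -∑ i, (softmax (q x) i * q x i) • gradient (fun y => log (softmax (q y) i)) x := by
  simp only [gradient, fderiv_entropy_softmax hq, map_neg, map_sum, map_smul]

theorem sum_smul_sub_add_sum_smul {M : Type*} [AddCommGroup M] [Module ℝ M]
    (c : ℝ) (w T b : ι → ℝ) (g : ι → M) (hw : ∑ i, w i = 1) :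
    ∑ i, (c * w i) • ((T i - b i) • g i + ∑ j, (w j * b j) • g j) =
      ∑ i, (c * w i * T i) • g i := by
  have hbaseline : ∑ i, (c * w i) • ∑ j, (w j * b j) • g j = ∑ i, (c * w i * b i) • g i := by
    rw [← sum_smul, ← mul_sum, hw, mul_one, smul_sum]
    simp only [smul_smul, mul_assoc]
  calc _ = ∑ i, ((c * w i) • ((T i - b i) • g i) + (c * w i * b i) • g i) := by
        rw [sum_add_distrib, ← hbaseline, ← sum_add_distrib]
        simp only [smul_add]
    _ = _ := sum_congr rfl fun i _ => by module

end

theorem pgpb_unbiased_general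
    {n : ℕ} {S A : Type*} [Fintype S] [Fintype A] [Nonempty A]
    (θ₀ : EuclideanSpace ℝ (Fin n))
    (d : S → ℝ)
    (That : S × A → ℝ)
    (q : EuclideanSpace ℝ (Fin n) → S → A → ℝ)
    (hq : ∀ (s : S) (a : A), DifferentiableAt ℝ (fun θ => q θ s a) θ₀)
    (π : EuclideanSpace ℝ (Fin n) → S → A → ℝ)
    (hπ : ∀ θ (s : S) (a : A),
      π θ s a = Real.exp (q θ s a) / ∑ u : A, Real.exp (q θ s u))
    (H : S → EuclideanSpace ℝ (Fin n) → ℝ)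
    (hH : ∀ (s : S) θ, H s θ = -∑ a : A, π θ s a * Real.log (π θ s a)) :
    ∑ s : S, ∑ a : A,
      (d s * π θ₀ s a * That (s, a)) • gradient (fun θ => Real.log (π θ s a)) θ₀ =
    ∑ s : S, ∑ a : A,
      (d s * π θ₀ s a) •
        ((That (s, a) - q θ₀ s a) • gradient (fun θ => Real.log (π θ s a)) θ₀ -
          gradient (H s) θ₀) := by
  obtain rfl : π = fun θ s => softmax (q θ s) := funext fun θ => funext fun s => funext (hπ θ s)
  obtain rfl : H = fun s θ => ∑ a, Real.negMulLog (softmax (q θ s) a) := by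
    funext s θ
    simp only [hH, Real.negMulLog, neg_mul, Finset.sum_neg_distrib]
  refine Finset.sum_congr rfl fun s _ => ?_
  rw [gradient_entropy_softmax (hq s)]
  simp only [sub_neg_eq_add]
  exact (sum_smul_sub_add_sum_smul (d s) _ _ _ _ (sum_softmax _)).symm

/-- Policy Gradient with Policy Baseline (PGPB) identity: the expectation of the
PGPB estimator under the on-policy distribution equals the expectation of
`T̂(s,a) • ∇ log π_θ(a|s)`. -/
theorem pgpb_unbiased
    {n : ℕ} {S A : Type*} [Fintype S] [Fintype A] [Nonempty S] [Nonempty A]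
    (θ₀ : EuclideanSpace ℝ (Fin n))
    (d : S → ℝ) (hd0 : ∀ s, 0 ≤ d s) (hd1 : ∑ s : S, d s = 1)
    (That : S × A → ℝ)
    (q : EuclideanSpace ℝ (Fin n) → S → A → ℝ)
    (hq : ∀ (s : S) (a : A), DifferentiableAt ℝ (fun θ => q θ s a) θ₀)
    (π : EuclideanSpace ℝ (Fin n) → S → A → ℝ)
    (hπ : ∀ θ (s : S) (a : A),
      π θ s a = Real.exp (q θ s a) / ∑ u : A, Real.exp (q θ s u))
    (H : S → EuclideanSpace ℝ (Fin n) → ℝ)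
    (hH : ∀ (s : S) θ, H s θ = -∑ a : A, π θ s a * Real.log (π θ s a)) :
    ∑ s : S, ∑ a : A,
      (d s * π θ₀ s a * That (s, a)) • gradient (fun θ => Real.log (π θ s a)) θ₀ =
    ∑ s : S, ∑ a : A,
      (d s * π θ₀ s a) •
        ((That (s, a) - q θ₀ s a) • gradient (fun θ => Real.log (π θ s a)) θ₀ -
          gradient (H s) θ₀) :=
  pgpb_unbiased_general θ₀ d That q hq π hπ H hH
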